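/- arXiv:1003.0857 — 2 statements merged into one kernel-verified Lean document; each statement's English description precedes it below -/
import Mathlib

section
/- Trigonometric Sen identity: for arbitrary nonzero reals λ, m_1, ..., m_N, the function Φ₀(X) = Π_{J<K} sin((X_J−X_K)/2)^{λ m_J m_K} satisfies (ℋ − E₀)Φ₀ = 0 on the region where 0 < (X_J − X_K) < 2π for all J < K, where ℋ = −Σ_J (1/m_J) ∂²/∂X_J² + Σ_{J<K} γ_{JK}/(4 sin²((X_J−X_K)/2)) with γ_{JK} = λ(m_J+m_K)(λ m_J m_K − 1), and E₀ = (λ²/12)·((Σ m_J)³ − Σ m_J³). -/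
/-!
On the region, `Φ₀ = exp W` with `W = ∑_{J<K} λ m_J m_K log sin ((X_J - X_K)/2)`, hence
`∂_J² Φ₀ = Φ₀ ((∂_J W)² + ∂_J² W)`, where `∂_J W = (λ m_J/2) ∑_K m_K cot ((X_J - X_K)/2)` and
`∂_J² W = -(λ m_J/4) ∑_K m_K / sin² ((X_J - X_K)/2)`. In `∑_J m_J (∑_K m_K cot)²` the terms
with three distinct indices are symmetrised by `cot u cot v + cot v cot w + cot w cot u = 1`
(for `u + v + w = 0`) and add up to `-(1/3) ∑_{distinct} m_I m_J m_K`, while the terms with a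
repeated index are rewritten by `cot² = 1/sin² - 1`. All `1/sin²` terms then cancel against the
potential `∑ γ_{JK} V`, and the constants add up to `E₀`.
-/

open Finset Real Filter Topology

namespace Real

theorem cot_zero : cot 0 = 0 := by simp [cot_eq_cos_div_sin]

theorem cot_neg (x : ℝ) : cot (-x) = -cot x := by
  rw [cot_eq_cos_div_sin, cot_eq_cos_div_sin, cos_neg, sin_neg, div_neg]

theorem cot_sub_comm (a b : ℝ) : cot (a - b) = -cot (b - a) := by
  rw [← neg_sub, cot_neg]

theorem sin_sub_div_two_sq_comm (a b : ℝ) : sin ((a - b) / 2) ^ 2 = sin ((b - a) / 2) ^ 2 := by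
  rw [← neg_sub, neg_div, sin_neg, neg_sq]

theorem cot_sub_div_two_comm (a b : ℝ) : cot ((a - b) / 2) = -cot ((b - a) / 2) := by
  rw [← neg_sub, neg_div, cot_neg]

theorem cot_sq_add_one {x : ℝ} (hx : sin x ≠ 0) : cot x ^ 2 + 1 = 1 / sin x ^ 2 := by
  rw [cot_eq_cos_div_sin]
  field_simp
  linear_combination cos_sq_add_sin_sq x

theorem cot_add_mul_cot_add_cot {u v : ℝ} (hu : sin u ≠ 0) (hv : sin v ≠ 0)
    (huv : sin (u + v) ≠ 0) : cot (u + v) * (cot u + cot v) = cot u * cot v - 1 := by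
  simp only [cot_eq_cos_div_sin]
  field_simp
  rw [sin_add, cos_add]
  ring

theorem hasDerivAt_cot {x : ℝ} (hx : sin x ≠ 0) : HasDerivAt cot (-1 / sin x ^ 2) x := by
  have h := (hasDerivAt_cos x).div (hasDerivAt_sin x) hx
  rw [show cos / sin = cot from funext fun y => (cot_eq_cos_div_sin y).symm] at h
  refine h.congr_deriv ?_
  rw [← sin_sq_add_cos_sq x]
  ring

end Real

theorem Finset.sum_sum_sum_rotate {ι M : Type*} [Fintype ι] [AddCommMonoid M]
    (f : ι → ι → ι → M) : ∑ i, ∑ j, ∑ k, f j k i = ∑ i, ∑ j, ∑ k, f i j k := by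
  rw [sum_comm]
  exact sum_congr rfl fun _ _ => sum_comm

theorem Finset.sum_sum_Ioi_add_eq_sum_sum {α M : Type*} [LinearOrder α] [Fintype α]
    [LocallyFiniteOrderTop α] [LocallyFiniteOrderBot α] [AddCommMonoid M] (f : α → α → M)
    (hf : ∀ i, f i i = 0) :
    ∑ i, ∑ j ∈ Ioi i, (f i j + f j i) = ∑ i, ∑ j, f i j := by
  refine (sum_sum_Ioi_add_eq_sum_sum_off_diag fun i j => f j i).trans
    (sum_congr rfl fun i _ => ?_)
  rw [← sum_compl_add_sum {i}, sum_singleton, hf, add_zero]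

section CotangentSums

variable {ι : Type*} {x : ι → ℝ}

/-- Since `cot 0 = 0` and `1 / sin 0 ^ 2 = 0`, the sums below may run over all indices,
diagonal included; the indicator terms are the corrections this causes on the diagonals. -/
theorem cot_sub_cyclic_sum [DecidableEq ι] (hx : Pairwise fun i j => sin (x i - x j) ≠ 0)
    (i j k : ι) :
    cot (x i - x j) * cot (x i - x k) + cot (x j - x k) * cot (x j - x i)
      + cot (x k - x i) * cot (x k - x j)
      = -1 + (if i = j then 1 / sin (x i - x k) ^ 2 else 0)
        + (if j = k then 1 / sin (x j - x i) ^ 2 else 0)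
        + (if k = i then 1 / sin (x k - x j) ^ 2 else 0) + (if i = j ∧ j = k then 1 else 0) := by
  obtain rfl | hij := eq_or_ne i j
  · obtain rfl | hik := eq_or_ne i k
    · simp [cot_zero]
    · simp [hik, hik.symm, cot_zero, cot_sub_comm (x k)]
      linear_combination cot_sq_add_one (hx hik)
  obtain rfl | hjk := eq_or_ne j k
  · rw [← neg_sub (x i), sin_neg, neg_sq]
    simp [hij, hij.symm, cot_zero, cot_sub_comm (x j)]
    linear_combination cot_sq_add_one (hx hij)
  obtain rfl | hki := eq_or_ne k i
  · simp [hij, hjk, cot_zero, cot_sub_comm (x j) (x k)]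
    linear_combination cot_sq_add_one (hx hij)
  have h := cot_add_mul_cot_add_cot (hx hij) (hx hjk)
    (by rw [sub_add_sub_cancel]; exact hx hki.symm)
  rw [sub_add_sub_cancel] at h
  simp only [hij, hjk, hki, if_false, false_and]
  rw [cot_sub_comm (x j) (x i), cot_sub_comm (x k) (x j), cot_sub_comm (x k) (x i)]
  linear_combination h

theorem sum_sum_sum_mul_cyclic_indicator [Fintype ι] [DecidableEq ι] (m : ι → ℝ)
    (q : ι → ι → ℝ) :
    ∑ i, ∑ j, ∑ k, m i * m j * m k * (-1 + (if i = j then q i k else 0)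
        + (if j = k then q j i else 0) + (if k = i then q k j else 0)
        + (if i = j ∧ j = k then 1 else 0))
      = -(∑ i, m i) ^ 3 + 3 * ∑ i, ∑ j, m i ^ 2 * m j * q i j + ∑ i, m i ^ 3 := by
  have hcube : (∑ i, m i) ^ 3 = ∑ i, ∑ j, ∑ k, m i * m j * m k := by
    rw [pow_three, sum_mul_sum, sum_mul_sum]
    simp only [mul_sum, mul_assoc]
  have hswap : ∑ i, ∑ j, m i * m j * m j * q j i = ∑ i, ∑ j, m i ^ 2 * m j * q i j := by
    rw [sum_comm]
    exact sum_congr rfl fun _ _ => sum_congr rfl fun _ _ => by ring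
  simp only [mul_add, mul_ite, mul_zero, mul_one, sum_add_distrib, ite_and, sum_ite_eq,
    sum_ite_eq', sum_ite_irrel, sum_const_zero, mem_univ, if_true, mul_neg, sum_neg_distrib]
  rw [hcube, hswap]
  ring_nf

theorem sum_mul_sum_mul_cot_sub_sq [Fintype ι] [DecidableEq ι] (m : ι → ℝ)
    (hx : Pairwise fun i j => sin (x i - x j) ≠ 0) :
    ∑ i, m i * (∑ j, m j * cot (x i - x j)) ^ 2
      = ∑ i, ∑ j, m i ^ 2 * m j / sin (x i - x j) ^ 2
        - ((∑ i, m i) ^ 3 - ∑ i, m i ^ 3) / 3 := by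
  set T : ι → ι → ι → ℝ := fun i j k =>
    m i * m j * m k * (cot (x i - x j) * cot (x i - x k))
  have hexpand :
      ∑ i, m i * (∑ j, m j * cot (x i - x j)) ^ 2 = ∑ i, ∑ j, ∑ k, T i j k := by
    simp only [sq, sum_mul_sum]
    simp only [mul_sum, T]
    exact sum_congr rfl fun _ _ => sum_congr rfl fun _ _ => sum_congr rfl fun _ _ => by ring
  have hrot₁ : ∑ i, ∑ j, ∑ k, T j k i = ∑ i, ∑ j, ∑ k, T i j k := sum_sum_sum_rotate T
  have hrot₂ : ∑ i, ∑ j, ∑ k, T k i j = ∑ i, ∑ j, ∑ k, T i j k :=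
    (sum_sum_sum_rotate fun i j k => T k i j).symm
  have hsym : 3 * ∑ i, ∑ j, ∑ k, T i j k = -(∑ i, m i) ^ 3
      + 3 * ∑ i, ∑ j, m i ^ 2 * m j * (1 / sin (x i - x j) ^ 2) + ∑ i, m i ^ 3 := by
    rw [← sum_sum_sum_mul_cyclic_indicator]
    calc 3 * ∑ i, ∑ j, ∑ k, T i j k
        = ∑ i, ∑ j, ∑ k, (T i j k + T j k i + T k i j) := by
          simp only [sum_add_distrib, hrot₁, hrot₂]
          ring
      _ = _ := by
          refine sum_congr rfl fun i _ => sum_congr rfl fun j _ => sum_congr rfl fun k _ => ?_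
          rw [← cot_sub_cyclic_sum hx i j k]
          ring
  rw [hexpand]
  simp only [mul_one_div] at hsym
  linear_combination hsym / 3

end CotangentSums

theorem iteratedDeriv_two_exp_comp {W W' : ℝ → ℝ} {x w : ℝ}
    (hW : ∀ᶠ t in 𝓝 x, HasDerivAt W (W' t) t) (hW' : HasDerivAt W' w x) :
    iteratedDeriv 2 (fun t => exp (W t)) x = exp (W x) * (W' x ^ 2 + w) := by
  have hderiv : deriv (fun t => exp (W t)) =ᶠ[𝓝 x] fun t => exp (W t) * W' t :=
    hW.mono fun t ht => ht.exp.deriv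
  rw [iteratedDeriv_succ, iteratedDeriv_one, hderiv.deriv_eq,
    ((hW.self_of_nhds.exp).fun_mul hW').deriv]
  ring

theorem iteratedDeriv_two_prod_sin_rpow {ι : Type*} (s : Finset ι) (a c k : ι → ℝ) {x : ℝ}
    (hx : ∀ i ∈ s, 0 < sin (c i + k i * x)) :
    iteratedDeriv 2 (fun t => ∏ i ∈ s, sin (c i + k i * t) ^ a i) x
      = (∏ i ∈ s, sin (c i + k i * x) ^ a i)
        * ((∑ i ∈ s, a i * k i * cot (c i + k i * x)) ^ 2
          - ∑ i ∈ s, a i * k i ^ 2 / sin (c i + k i * x) ^ 2) := by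
  have hline : ∀ i t, HasDerivAt (fun t => c i + k i * t) (k i) t := fun i t => by
    simpa using ((hasDerivAt_id t).const_mul (k i)).const_add (c i)
  have hpos : ∀ᶠ t in 𝓝 x, ∀ i ∈ s, 0 < sin (c i + k i * t) :=
    (eventually_all_finset s).2 fun i hi =>
      (continuous_sin.comp (continuous_const.add (continuous_const.mul continuous_id))
        ).continuousAt.eventually (lt_mem_nhds (hx i hi))
  have hexp : (fun t => ∏ i ∈ s, sin (c i + k i * t) ^ a i)
      =ᶠ[𝓝 x] fun t => exp (∑ i ∈ s, a i * log (sin (c i + k i * t))) := by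
    filter_upwards [hpos] with t ht
    rw [exp_sum]
    exact prod_congr rfl fun i hi => by rw [rpow_def_of_pos (ht i hi), mul_comm]
  have hW : ∀ᶠ t in 𝓝 x, HasDerivAt (fun t => ∑ i ∈ s, a i * log (sin (c i + k i * t)))
      (∑ i ∈ s, a i * k i * cot (c i + k i * t)) t := by
    filter_upwards [hpos] with t ht
    refine HasDerivAt.fun_sum fun i hi => ?_
    refine (((hline i t).sin.log (ht i hi).ne').const_mul (a i)).congr_deriv ?_
    rw [cot_eq_cos_div_sin]
    ring
  have hW' : HasDerivAt (fun t => ∑ i ∈ s, a i * k i * cot (c i + k i * t))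
      (∑ i ∈ s, -(a i * k i ^ 2 / sin (c i + k i * x) ^ 2)) x := by
    refine HasDerivAt.fun_sum fun i hi => ?_
    refine (((hasDerivAt_cot (hx i hi).ne').comp x (hline i x)).const_mul (a i * k i)
      ).congr_deriv ?_
    ring
  rw [hexp.iteratedDeriv_eq, iteratedDeriv_two_exp_comp hW hW', ← hexp.eq_of_nhds,
    sum_neg_distrib, sub_eq_add_neg]

section PairSums

variable {ι : Type*} [LinearOrder ι] [Fintype ι] [LocallyFiniteOrderTop ι]
  [LocallyFiniteOrderBot ι]

theorem sum_sum_Ioi_single_sub_mul_cot [DecidableEq ι] (X : ι → ℝ) (a : ι → ι → ℝ)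
    (ha : ∀ J K, a J K = a K J) (J₀ : ι) :
    ∑ J, ∑ K ∈ Ioi J,
        a J K * (((Pi.single J₀ 1 : ι → ℝ) J - (Pi.single J₀ 1 : ι → ℝ) K) / 2)
          * cot ((X J - X K) / 2)
      = (∑ K, a J₀ K * cot ((X J₀ - X K) / 2)) / 2 := by
  set e : ι → ℝ := Pi.single J₀ 1
  calc _ = ∑ J, ∑ K ∈ Ioi J, (e J * (a J K * cot ((X J - X K) / 2)) / 2
          + e K * (a K J * cot ((X K - X J) / 2)) / 2) := by
        refine sum_congr rfl fun J _ => sum_congr rfl fun K _ => ?_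
        rw [ha K J, cot_sub_div_two_comm (X K)]
        ring
    _ = ∑ J, ∑ K, e J * (a J K * cot ((X J - X K) / 2)) / 2 :=
        sum_sum_Ioi_add_eq_sum_sum _ fun J => by simp [cot_zero]
    _ = _ := by
        simp only [e, Pi.single_apply, ite_mul, one_mul, zero_mul, ite_div, zero_div,
          sum_ite_irrel, sum_const_zero, sum_ite_eq', mem_univ, if_true, sum_div]

theorem sum_sum_Ioi_single_sub_sq_div_sin_sq [DecidableEq ι] (X : ι → ℝ)
    (a : ι → ι → ℝ) (ha : ∀ J K, a J K = a K J) (J₀ : ι) :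
    ∑ J, ∑ K ∈ Ioi J,
        a J K * (((Pi.single J₀ 1 : ι → ℝ) J - (Pi.single J₀ 1 : ι → ℝ) K) / 2) ^ 2
          / sin ((X J - X K) / 2) ^ 2
      = (∑ K, a J₀ K / sin ((X J₀ - X K) / 2) ^ 2) / 4 := by
  set e : ι → ℝ := Pi.single J₀ 1
  calc _ = ∑ J, ∑ K ∈ Ioi J, (e J * (a J K / sin ((X J - X K) / 2) ^ 2) / 4
          + e K * (a K J / sin ((X K - X J) / 2) ^ 2) / 4) := by
        refine sum_congr rfl fun J _ => sum_congr rfl fun K _ => ?_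
        rw [ha K J, sin_sub_div_two_sq_comm (X K)]
        by_cases hJ : J = J₀ <;> by_cases hK : K = J₀ <;> simp [e, hJ, hK] <;> ring
    _ = ∑ J, ∑ K, e J * (a J K / sin ((X J - X K) / 2) ^ 2) / 4 :=
        sum_sum_Ioi_add_eq_sum_sum _ fun J => by simp
    _ = _ := by
        simp only [e, Pi.single_apply, ite_mul, one_mul, zero_mul, ite_div, zero_div,
          sum_ite_irrel, sum_const_zero, sum_ite_eq', mem_univ, if_true, sum_div]

theorem iteratedDeriv_two_prod_sin_rpow_update [DecidableEq ι] (X : ι → ℝ)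
    (a : ι → ι → ℝ) (ha : ∀ J K, a J K = a K J)
    (hX : ∀ J K, J < K → 0 < sin ((X J - X K) / 2)) (J₀ : ι) :
    iteratedDeriv 2 (fun t => ∏ J, ∏ K ∈ Ioi J,
        sin ((Function.update X J₀ t J - Function.update X J₀ t K) / 2) ^ a J K) (X J₀)
      = (∏ J, ∏ K ∈ Ioi J, sin ((X J - X K) / 2) ^ a J K)
        * ((∑ K, a J₀ K * cot ((X J₀ - X K) / 2)) ^ 2 / 4
          - (∑ K, a J₀ K / sin ((X J₀ - X K) / 2) ^ 2) / 4) := by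
  set k : (Σ _ : ι, ι) → ℝ := fun p =>
    ((Pi.single J₀ 1 : ι → ℝ) p.1 - (Pi.single J₀ 1 : ι → ℝ) p.2) / 2
  set c : (Σ _ : ι, ι) → ℝ := fun p => (X p.1 - X p.2) / 2 - k p * X J₀
  have hupdate : ∀ t J K, (Function.update X J₀ t J - Function.update X J₀ t K) / 2
      = c ⟨J, K⟩ + k ⟨J, K⟩ * t := by
    intro t J K
    simp only [c, k, Pi.single_apply, Function.update_apply]
    split_ifs <;> subst_vars <;> ring
  have hat : ∀ J K, c ⟨J, K⟩ + k ⟨J, K⟩ * X J₀ = (X J - X K) / 2 := fun J K => by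
    simp only [c]
    ring
  have hfun : (fun t => ∏ J, ∏ K ∈ Ioi J,
      sin ((Function.update X J₀ t J - Function.update X J₀ t K) / 2) ^ a J K)
      = fun t => ∏ p ∈ univ.sigma Ioi, sin (c p + k p * t) ^ a p.1 p.2 := by
    funext t
    rw [prod_sigma]
    simp only [hupdate]
  rw [hfun, iteratedDeriv_two_prod_sin_rpow _ (fun p => a p.1 p.2) c k
    (fun p hp => by rw [hat]; exact hX _ _ (mem_Ioi.1 (mem_sigma.1 hp).2))]
  simp only [prod_sigma, sum_sigma, hat, k, sum_sum_Ioi_single_sub_mul_cot X a ha,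
    sum_sum_Ioi_single_sub_sq_div_sin_sq X a ha]
  ring

theorem sum_sum_Ioi_coupling_div_sin_sq (lam : ℝ) (m X : ι → ℝ) :
    ∑ J, ∑ K ∈ Ioi J, lam * (m J + m K) * (lam * m J * m K - 1)
        * (1 / (4 * sin ((X J - X K) / 2) ^ 2))
      = lam ^ 2 / 4 * ∑ J, ∑ K, m J ^ 2 * m K / sin ((X J - X K) / 2) ^ 2
        - lam / 4 * ∑ J, ∑ K, m K / sin ((X J - X K) / 2) ^ 2 := by
  set f : ι → ι → ℝ := fun J K =>
    (lam ^ 2 * m J ^ 2 * m K - lam * m K) / (4 * sin ((X J - X K) / 2) ^ 2)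
  calc _ = ∑ J, ∑ K ∈ Ioi J, (f J K + f K J) := by
        refine sum_congr rfl fun J _ => sum_congr rfl fun K _ => ?_
        simp only [f]
        rw [sin_sub_div_two_sq_comm (X K)]
        ring
    _ = ∑ J, ∑ K, f J K := sum_sum_Ioi_add_eq_sum_sum f fun J => by simp [f]
    _ = _ := by
        simp only [mul_sum, ← sum_sub_distrib]
        exact sum_congr rfl fun J _ => sum_congr rfl fun K _ => by ring

end PairSums

open Finset Real in
theorem sen_identity_trigonometric_general (N : ℕ) (lam : ℝ)
    (m : Fin N → ℝ) (hm : ∀ J, m J ≠ 0)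
    (Φ₀ : (Fin N → ℝ) → ℝ)
    (hΦ₀ : Φ₀ = fun X => ∏ J : Fin N, ∏ K ∈ Finset.Ioi J,
        Real.sin ((X J - X K) / 2) ^ (lam * m J * m K))
    (γ : Fin N → Fin N → ℝ)
    (hγ : γ = fun J K => lam * (m J + m K) * (lam * m J * m K - 1))
    (V : ℝ → ℝ) (hV : V = fun r => 1 / (4 * Real.sin (r / 2) ^ 2))
    (E₀ : ℝ) (hE₀ : E₀ = lam ^ 2 / 12 * ((∑ J : Fin N, m J) ^ 3 - ∑ J : Fin N, (m J) ^ 3))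
    (X : Fin N → ℝ)
    (hX : ∀ J K : Fin N, J < K → 0 < X J - X K ∧ X J - X K < 2 * Real.pi) :
    -∑ J : Fin N, (1 / m J) * iteratedDeriv 2 (fun t => Φ₀ (Function.update X J t)) (X J)
      + (∑ J : Fin N, ∑ K ∈ Finset.Ioi J, γ J K * V (X J - X K)) * Φ₀ X
      = E₀ * Φ₀ X := by
  subst hΦ₀ hγ hV hE₀
  beta_reduce
  have hsin : ∀ J K : Fin N, J < K → 0 < sin ((X J - X K) / 2) := fun J K h =>
    sin_pos_of_pos_of_lt_pi (by linarith [(hX J K h).1]) (by linarith [(hX J K h).2])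
  have hne : Pairwise fun J K : Fin N => sin (X J / 2 - X K / 2) ≠ 0 := by
    intro J K hJK
    rw [← sub_div]
    rcases hJK.lt_or_gt with h | h
    · exact (hsin J K h).ne'
    · rw [← neg_sub, neg_div, sin_neg, neg_ne_zero]
      exact (hsin K J h).ne'
  have hcal := sum_mul_sum_mul_cot_sub_sq m hne
  simp only [← sub_div] at hcal
  have hkinetic : ∀ J, 1 / m J * iteratedDeriv 2 (fun t => ∏ J', ∏ K ∈ Ioi J',
      sin ((Function.update X J t J' - Function.update X J t K) / 2) ^ (lam * m J' * m K)) (X J)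
      = (∏ J, ∏ K ∈ Ioi J, sin ((X J - X K) / 2) ^ (lam * m J * m K))
        * (lam ^ 2 / 4 * (m J * (∑ K, m K * cot ((X J - X K) / 2)) ^ 2)
          - lam / 4 * ∑ K, m K / sin ((X J - X K) / 2) ^ 2) := by
    intro J
    rw [iteratedDeriv_two_prod_sin_rpow_update X _ (fun _ _ => by ring) hsin J]
    simp only [mul_assoc, mul_div_assoc, ← mul_sum]
    field_simp [hm J]
  simp only [hkinetic, sum_sum_Ioi_coupling_div_sin_sq]
  rw [← mul_sum, sum_sub_distrib, ← mul_sum, ← mul_sum, hcal]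
  ring

open Finset Real in
theorem sen_identity_trigonometric (N : ℕ) (hN : 2 ≤ N) (lam : ℝ) (hlam : lam ≠ 0)
    (m : Fin N → ℝ) (hm : ∀ J, m J ≠ 0)
    (Φ₀ : (Fin N → ℝ) → ℝ)
    (hΦ₀ : Φ₀ = fun X => ∏ J : Fin N, ∏ K ∈ Finset.Ioi J,
        Real.sin ((X J - X K) / 2) ^ (lam * m J * m K))
    (γ : Fin N → Fin N → ℝ)
    (hγ : γ = fun J K => lam * (m J + m K) * (lam * m J * m K - 1))
    (V : ℝ → ℝ) (hV : V = fun r => 1 / (4 * Real.sin (r / 2) ^ 2))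
    (E₀ : ℝ) (hE₀ : E₀ = lam ^ 2 / 12 * ((∑ J : Fin N, m J) ^ 3 - ∑ J : Fin N, (m J) ^ 3))
    (X : Fin N → ℝ)
    (hX : ∀ J K : Fin N, J < K → 0 < X J - X K ∧ X J - X K < 2 * Real.pi) :
    -∑ J : Fin N, (1 / m J) * iteratedDeriv 2 (fun t => Φ₀ (Function.update X J t)) (X J)
      + (∑ J : Fin N, ∑ K ∈ Finset.Ioi J, γ J K * V (X J - X K)) * Φ₀ X
      = E₀ * Φ₀ X :=
  sen_identity_trigonometric_general N lam m hm Φ₀ hΦ₀ γ hγ V hV E₀ hE₀ X hX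
end

section
/- Concrete deformed eigenfunction (N = 1, Ñ = 2, λ = 2): the function Ψ₀(x, u, v) = sin((u−v)/2)^{1/2} / ( sin((x−u)/2)·sin((x−v)/2) ) satisfies −∂²Ψ₀/∂x² + 2∂²Ψ₀/∂u² + 2∂²Ψ₀/∂v² + [V(u−v) − 2V(x−u) − 2V(x−v)]·Ψ₀ = −(1/4)·Ψ₀, where V(r) = 1/(4 sin²(r/2)), on any region where sin((u−v)/2), sin((x−u)/2), sin((x−v)/2) are all positive. -/
/-!
In each of its three variables, Ψ₀ is a product of real powers of sines of half-differences, so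
its logarithmic derivative `L` is a combination of cotangents and `f'' = f (L² + L')`. Since
`(cot (t/2) / 2)' = -V t` and `V t = (cot (t/2) / 2)² + 1/4`, the Schrödinger operator divides
out to a quadratic form in the three cotangents, which collapses to `-1/4` by the addition
formula `cot (β - α) (cot α - cot β) = cot α cot β + 1`.
-/

open Real Topology

/-- `f' = f l` at `x`: away from the zeros of `f` this says `logDeriv f x = l`, but unlike
`logDeriv` it asks for differentiability and carries no junk values. -/
def HasLogDerivAt (f : ℝ → ℝ) (l x : ℝ) : Prop :=
  HasDerivAt f (f x * l) x

namespace HasLogDerivAt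

variable {f g : ℝ → ℝ} {l m x : ℝ}

theorem mul (hf : HasLogDerivAt f l x) (hg : HasLogDerivAt g m x) :
    HasLogDerivAt (fun t => f t * g t) (l + m) x :=
  (HasDerivAt.mul hf hg).congr_deriv (by ring)

theorem div (hf : HasLogDerivAt f l x) (hg : HasLogDerivAt g m x) (hg0 : g x ≠ 0) :
    HasLogDerivAt (fun t => f t / g t) (l - m) x :=
  (HasDerivAt.div hf hg hg0).congr_deriv (by field_simp)

theorem rpow_const (hf : HasLogDerivAt f l x) (hf0 : 0 < f x) (p : ℝ) :
    HasLogDerivAt (fun t => f t ^ p) (p * l) x :=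
  (HasDerivAt.rpow_const hf (Or.inl hf0.ne')).congr_deriv (by
    rw [rpow_sub_one hf0.ne']; field_simp)

end HasLogDerivAt

theorem iteratedDeriv_two_eq_of_hasLogDerivAt {f l : ℝ → ℝ} {l' x : ℝ}
    (hf : ∀ᶠ t in 𝓝 x, HasLogDerivAt f (l t) t) (hl : HasDerivAt l l' x) :
    iteratedDeriv 2 f x = f x * (l x ^ 2 + l') := by
  have hderiv : deriv f =ᶠ[𝓝 x] fun t => f t * l t := hf.mono fun t ht => ht.deriv
  rw [iteratedDeriv_succ, iteratedDeriv_one, hderiv.deriv_eq]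
  exact (HasDerivAt.mul hf.self_of_nhds hl).deriv.trans (by ring)

section SinComp

variable {θ : ℝ → ℝ} {k x : ℝ}

theorem hasLogDerivAt_sin_comp (hθ : HasDerivAt θ k x) (hs : sin (θ x) ≠ 0) :
    HasLogDerivAt (fun t => sin (θ t)) (k * cot (θ x)) x :=
  hθ.sin.congr_deriv (by rw [cot_eq_cos_div_sin]; field_simp)

theorem hasDerivAt_cot_comp (hθ : HasDerivAt θ k x) (hs : sin (θ x) ≠ 0) :
    HasDerivAt (fun t => cot (θ t)) (-k / sin (θ x) ^ 2) x := by
  simp only [cot_eq_cos_div_sin]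
  refine (hθ.cos.div hθ.sin hs).congr_deriv ?_
  field_simp
  linear_combination (-k) * sin_sq_add_cos_sq (θ x)

end SinComp

theorem inv_sin_sq_eq_one_add_cot_sq {α : ℝ} (hα : sin α ≠ 0) : (sin α ^ 2)⁻¹ = 1 + cot α ^ 2 := by
  rw [cot_eq_cos_div_sin]
  field_simp
  exact (sin_sq_add_cos_sq α).symm

theorem cot_sub_mul_cot_sub_cot {α β : ℝ} (hα : sin α ≠ 0) (hβ : sin β ≠ 0)
    (hβα : sin (β - α) ≠ 0) : cot (β - α) * (cot α - cot β) = cot α * cot β + 1 := by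
  simp only [cot_eq_cos_div_sin]
  field_simp
  rw [sin_sub, cos_sub]
  ring

/-- Each partial function of Ψ₀ has this shape, a constant factor being the sine of an argument of
slope `0`. -/
theorem iteratedDeriv_two_sin_rpow_div_sin_mul_sin {θ₁ θ₂ θ₃ : ℝ → ℝ} {k₁ k₂ k₃ p x : ℝ}
    (hθ₁ : ∀ t, HasDerivAt θ₁ k₁ t) (hθ₂ : ∀ t, HasDerivAt θ₂ k₂ t)
    (hθ₃ : ∀ t, HasDerivAt θ₃ k₃ t)
    (h₁ : 0 < sin (θ₁ x)) (h₂ : sin (θ₂ x) ≠ 0) (h₃ : sin (θ₃ x) ≠ 0) :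
    iteratedDeriv 2 (fun t => sin (θ₁ t) ^ p / (sin (θ₂ t) * sin (θ₃ t))) x =
      sin (θ₁ x) ^ p / (sin (θ₂ x) * sin (θ₃ x)) *
        ((p * (k₁ * cot (θ₁ x)) - (k₂ * cot (θ₂ x) + k₃ * cot (θ₃ x))) ^ 2
          + (-(p * k₁ ^ 2) / sin (θ₁ x) ^ 2 + k₂ ^ 2 / sin (θ₂ x) ^ 2
            + k₃ ^ 2 / sin (θ₃ x) ^ 2)) := by
  have hsin : ∀ {θ : ℝ → ℝ} {k : ℝ}, (∀ t, HasDerivAt θ k t) →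
      ContinuousAt (fun t => sin (θ t)) x := fun hθ =>
    continuous_sin.continuousAt.comp (hθ x).continuousAt
  have hnear : ∀ᶠ t in 𝓝 x, 0 < sin (θ₁ t) ∧ sin (θ₂ t) ≠ 0 ∧ sin (θ₃ t) ≠ 0 :=
    ((hsin hθ₁).eventually (lt_mem_nhds h₁)).and
      (((hsin hθ₂).eventually_ne h₂).and ((hsin hθ₃).eventually_ne h₃))
  have hlog := hnear.mono fun t ⟨ht₁, ht₂, ht₃⟩ =>
    ((hasLogDerivAt_sin_comp (hθ₁ t) ht₁.ne').rpow_const ht₁ p).div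
      ((hasLogDerivAt_sin_comp (hθ₂ t) ht₂).mul (hasLogDerivAt_sin_comp (hθ₃ t) ht₃))
      (mul_ne_zero ht₂ ht₃)
  have hcot := (((hasDerivAt_cot_comp (hθ₁ x) h₁.ne').const_mul k₁).const_mul p).sub
    (((hasDerivAt_cot_comp (hθ₂ x) h₂).const_mul k₂).add
      ((hasDerivAt_cot_comp (hθ₃ x) h₃).const_mul k₃))
  rw [iteratedDeriv_two_eq_of_hasLogDerivAt hlog hcot]
  ring

open Real in
theorem concrete_deformed_eigenfunction
    (V : ℝ → ℝ) (hV : V = fun r => 1 / (4 * Real.sin (r / 2) ^ 2))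
    (Ψ₀ : ℝ → ℝ → ℝ → ℝ)
    (hΨ₀ : Ψ₀ = fun x u v => Real.sin ((u - v) / 2) ^ ((1 : ℝ) / 2) /
        (Real.sin ((x - u) / 2) * Real.sin ((x - v) / 2)))
    (x u v : ℝ)
    (h1 : 0 < Real.sin ((u - v) / 2)) (h2 : 0 < Real.sin ((x - u) / 2))
    (h3 : 0 < Real.sin ((x - v) / 2)) :
    -iteratedDeriv 2 (fun t => Ψ₀ t u v) x
      + 2 * iteratedDeriv 2 (fun t => Ψ₀ x t v) u
      + 2 * iteratedDeriv 2 (fun t => Ψ₀ x u t) v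
      + (V (u - v) - 2 * V (x - u) - 2 * V (x - v)) * Ψ₀ x u v
      = -(1 / 4) * Ψ₀ x u v := by
  subst hV hΨ₀
  have hsub (a t : ℝ) : HasDerivAt (fun s => (s - a) / 2) (1 / 2) t :=
    ((hasDerivAt_id' t).sub_const a).div_const 2
  have hrev (a t : ℝ) : HasDerivAt (fun s => (a - s) / 2) (-1 / 2) t :=
    ((hasDerivAt_id' t).const_sub a).div_const 2
  have hconst (a t : ℝ) : HasDerivAt (fun _ => a) 0 t := hasDerivAt_const t a
  rw [iteratedDeriv_two_sin_rpow_div_sin_mul_sin (hconst _) (hsub u) (hsub v) h1 h2.ne' h3.ne',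
    iteratedDeriv_two_sin_rpow_div_sin_mul_sin (hsub v) (hrev x) (hconst _) h1 h2.ne' h3.ne',
    iteratedDeriv_two_sin_rpow_div_sin_mul_sin (hrev u) (hconst _) (hrev x) h1 h2.ne' h3.ne']
  have hθ : (x - v) / 2 - (x - u) / 2 = (u - v) / 2 := by ring
  have hcot := cot_sub_mul_cot_sub_cot h2.ne' h3.ne' (hθ ▸ h1.ne')
  rw [hθ] at hcot
  have hA := inv_sin_sq_eq_one_add_cot_sq h1.ne'
  have hB := inv_sin_sq_eq_one_add_cot_sq h2.ne'
  have hC := inv_sin_sq_eq_one_add_cot_sq h3.ne'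
  beta_reduce
  set Ψ := sin ((u - v) / 2) ^ ((1 : ℝ) / 2) / (sin ((x - u) / 2) * sin ((x - v) / 2))
  linear_combination Ψ / 2 * hcot - Ψ / 4 * (hA + hB + hC)
end
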